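/- The polynomial P₄(x,y,z) = (xz + yz + xy − 1)² ∈ ℝ[x,y,z] is extremal in σ_P(2,2,2): whenever P₄ = g + h with g, h ∈ σ_P(2,2,2), there exists a real constant c ≥ 0 with g = c·P₄. -/
import Mathlib

open MvPolynomial

noncomputable section

/-- `σ_P(2,2,2)`: real polynomials in `x,y,z` of degree at most `2` in each variable that are
nonnegative on all of `ℝ³`. -/
def sigmaP222 : Set (MvPolynomial (Fin 3) ℝ) :=
  { p | p.degreeOf 0 ≤ 2 ∧ p.degreeOf 1 ≤ 2 ∧ p.degreeOf 2 ≤ 2 ∧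
        ∀ x : Fin 3 → ℝ, 0 ≤ eval x p }


/-- substitution of variable `i` by a polynomial variable, others by values -/
def phi (i : Fin 3) (v : Fin 3 → ℝ) : MvPolynomial (Fin 3) ℝ →+* Polynomial ℝ :=
  MvPolynomial.eval₂Hom Polynomial.C (fun j => if j = i then Polynomial.X else Polynomial.C (v j))

lemma phi_eval (i : Fin 3) (v : Fin 3 → ℝ) (p : MvPolynomial (Fin 3) ℝ) (t : ℝ) :
    (phi i v p).eval t = eval (Function.update v i t) p := by
  induction p using MvPolynomial.induction_on with
  | C a => simp [phi]
  | add p q hp hq => simp [map_add, hp, hq]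
  | mul_X p j hp =>
    simp only [map_mul, phi, eval₂Hom_X', Polynomial.eval_mul, hp, MvPolynomial.eval_mul,
      MvPolynomial.eval_X]
    congr 1
    rw [Function.update_apply]
    split_ifs <;> simp

lemma ext_off_finite (f₁ f₂ : Polynomial ℝ) (S : Set ℝ) (hS : S.Finite)
    (h : ∀ x ∉ S, f₁.eval x = f₂.eval x) : ∀ x, f₁.eval x = f₂.eval x := by
  have hz : f₁ - f₂ = 0 := by
    apply Polynomial.eq_zero_of_infinite_isRoot
    apply Set.Infinite.mono _ hS.infinite_compl
    intro x hx
    simp only [Set.mem_setOf_eq, Polynomial.IsRoot, Polynomial.eval_sub, sub_eq_zero]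
    exact h x hx
  intro x
  have : f₁ = f₂ := sub_eq_zero.mp hz
  rw [this]

lemma evalExpand (i : Fin 3) (p : MvPolynomial (Fin 3) ℝ) (v : Fin 3 → ℝ) (s : ℝ) :
    eval (Function.update v i s) p =
      ∑ m ∈ p.support, coeff m p * (s ^ m i * ∏ j ∈ Finset.univ.erase i, v j ^ m j) := by
  rw [eval_eq']
  refine Finset.sum_congr rfl fun m _ => ?_
  congr 1
  rw [← Finset.mul_prod_erase Finset.univ _ (Finset.mem_univ i)]
  congr 1
  · simp
  · exact Finset.prod_congr rfl fun j hj => by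
      rw [Function.update_of_ne (Finset.ne_of_mem_erase hj)]

lemma evalSq (i : Fin 3) (p : MvPolynomial (Fin 3) ℝ) (hp : p.degreeOf i ≤ 2) (v : Fin 3 → ℝ)
    (t : ℝ) :
    eval (Function.update v i t) p =
      ((eval (Function.update v i 1) p + eval (Function.update v i (-1)) p) / 2
          - eval (Function.update v i 0) p) * t ^ 2
        + ((eval (Function.update v i 1) p - eval (Function.update v i (-1)) p) / 2) * t
        + eval (Function.update v i 0) p := by
  have hm : ∀ m ∈ p.support, m i ≤ 2 := by
    intro m hmem
    have h3 : p.degreeOf i < 3 := lt_of_le_of_lt hp (by norm_num)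
    have := (degreeOf_lt_iff (by norm_num : (0:ℕ) < 3)).mp h3 m hmem
    omega
  simp only [evalExpand]
  calc ∑ m ∈ p.support, coeff m p * (t ^ m i * ∏ j ∈ Finset.univ.erase i, v j ^ m j)
      = ∑ m ∈ p.support,
          (((coeff m p * ((1:ℝ) ^ m i * ∏ j ∈ Finset.univ.erase i, v j ^ m j)
              + coeff m p * ((-1:ℝ) ^ m i * ∏ j ∈ Finset.univ.erase i, v j ^ m j)) / 2
            - coeff m p * ((0:ℝ) ^ m i * ∏ j ∈ Finset.univ.erase i, v j ^ m j)) * t ^ 2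
          + (coeff m p * ((1:ℝ) ^ m i * ∏ j ∈ Finset.univ.erase i, v j ^ m j)
              - coeff m p * ((-1:ℝ) ^ m i * ∏ j ∈ Finset.univ.erase i, v j ^ m j)) / 2 * t
          + coeff m p * ((0:ℝ) ^ m i * ∏ j ∈ Finset.univ.erase i, v j ^ m j)) := by
        refine Finset.sum_congr rfl fun m hmem => ?_
        have h2 := hm m hmem
        set K := ∏ j ∈ Finset.univ.erase i, v j ^ m j
        interval_cases h : m i <;> norm_num <;> ring
    _ = _ := by
        simp only [Finset.sum_add_distrib, Finset.sum_sub_distrib, ← Finset.sum_mul,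
          ← Finset.sum_div]

lemma quad_nonneg_root (a b c t₀ : ℝ) (h : ∀ t, 0 ≤ a * t ^ 2 + b * t + c)
    (h0 : a * t₀ ^ 2 + b * t₀ + c = 0) : ∀ t, a * t ^ 2 + b * t + c = a * (t - t₀) ^ 2 := by
  have key : ∀ s, 0 ≤ a * s ^ 2 + (2 * a * t₀ + b) * s := by
    intro s
    have := h (t₀ + s)
    nlinarith [h0]
  have ha : 0 ≤ a := by
    have h1 := key 1
    have h2 := key (-1)
    nlinarith
  have hd : 2 * a * t₀ + b = 0 := by
    set d := 2 * a * t₀ + b with hdd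
    have hpos : (0:ℝ) < a + 1 := by linarith
    have hp2 : (0:ℝ) < (a + 1) ^ 2 := by positivity
    have hk := key (-d / (a + 1))
    have heq : a * (-d / (a + 1)) ^ 2 + d * (-d / (a + 1)) = -(d ^ 2) / (a + 1) ^ 2 := by
      field_simp
      ring
    rw [heq] at hk
    have hle : d ^ 2 ≤ 0 := by
      by_contra hneg
      push_neg at hneg
      have : -(d ^ 2) / (a + 1) ^ 2 < 0 := div_neg_of_neg_of_pos (by linarith) hp2
      linarith
    have : d ^ 2 = 0 := le_antisymm hle (sq_nonneg d)
    exact pow_eq_zero_iff (by norm_num) |>.mp this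
  intro t
  linear_combination (t - t₀) * hd + h0


lemma upd0 (x y z t : ℝ) : Function.update ![x, y, z] 0 t = ![t, y, z] := by
  funext j; fin_cases j <;> simp [Function.update]
lemma upd1 (x y z t : ℝ) : Function.update ![x, y, z] 1 t = ![x, t, z] := by
  funext j; fin_cases j <;> simp [Function.update]
lemma upd2 (x y z t : ℝ) : Function.update ![x, y, z] 2 t = ![x, y, t] := by
  funext j; fin_cases j <;> simp [Function.update]
lemma veta (v : Fin 3 → ℝ) : ![v 0, v 1, v 2] = v := by
  funext j; fin_cases j <;> rfl


def A2 (g : MvPolynomial (Fin 3) ℝ) (x y : ℝ) : ℝ :=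
  (eval ![x, y, 1] g + eval ![x, y, -1] g) / 2 - eval ![x, y, 0] g
def B2 (g : MvPolynomial (Fin 3) ℝ) (y z : ℝ) : ℝ :=
  (eval ![1, y, z] g + eval ![-1, y, z] g) / 2 - eval ![0, y, z] g
def D2 (g : MvPolynomial (Fin 3) ℝ) (x z : ℝ) : ℝ :=
  (eval ![x, 1, z] g + eval ![x, -1, z] g) / 2 - eval ![x, 0, z] g

variable {g : MvPolynomial (Fin 3) ℝ}

lemma claimA (hd2 : g.degreeOf 2 ≤ 2) (hnn : ∀ v, 0 ≤ eval v g)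
    (hub : ∀ x y z : ℝ, eval ![x, y, z] g ≤ (x*z + y*z + x*y - 1) ^ 2) :
    ∀ x y z : ℝ, x + y ≠ 0 →
      eval ![x, y, z] g * (x + y) ^ 2 = A2 g x y * (x*z + y*z + x*y - 1) ^ 2 := by
  intro x y z hxy
  set z₀ := (1 - x*y) / (x + y) with hz₀
  have hstr : ∀ t : ℝ, eval ![x, y, t] g =
      A2 g x y * t ^ 2 + ((eval ![x, y, 1] g - eval ![x, y, -1] g) / 2) * t
        + eval ![x, y, 0] g := by
    intro t
    have h := evalSq 2 g hd2 ![x, y, z] t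
    simpa [upd2, A2] using h
  have hnn' : ∀ t : ℝ, 0 ≤ A2 g x y * t ^ 2 + ((eval ![x, y, 1] g - eval ![x, y, -1] g) / 2) * t
      + eval ![x, y, 0] g := fun t => (hstr t) ▸ hnn ![x, y, t]
  have hq0 : x*z₀ + y*z₀ + x*y - 1 = 0 := by
    rw [hz₀]; field_simp; ring
  have hroot : A2 g x y * z₀ ^ 2 + ((eval ![x, y, 1] g - eval ![x, y, -1] g) / 2) * z₀
      + eval ![x, y, 0] g = 0 := by
    rw [← hstr]
    refine le_antisymm ?_ (hnn _)
    calc eval ![x, y, z₀] g ≤ (x*z₀ + y*z₀ + x*y - 1) ^ 2 := hub x y z₀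
      _ = 0 := by rw [hq0]; ring
  have hfor := quad_nonneg_root _ _ _ z₀ hnn' hroot
  have heq : eval ![x, y, z] g = A2 g x y * (z - z₀) ^ 2 := by rw [hstr z, hfor z]
  rw [heq]
  have hfac : (z - z₀) * (x + y) = x*z + y*z + x*y - 1 := by
    rw [hz₀]; field_simp; ring
  calc A2 g x y * (z - z₀) ^ 2 * (x + y) ^ 2 = A2 g x y * ((z - z₀) * (x + y)) ^ 2 := by ring
    _ = _ := by rw [hfac]

lemma claimB (hd0 : g.degreeOf 0 ≤ 2) (hnn : ∀ v, 0 ≤ eval v g)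
    (hub : ∀ x y z : ℝ, eval ![x, y, z] g ≤ (x*z + y*z + x*y - 1) ^ 2) :
    ∀ x y z : ℝ, y + z ≠ 0 →
      eval ![x, y, z] g * (y + z) ^ 2 = B2 g y z * (x*z + y*z + x*y - 1) ^ 2 := by
  intro x y z hyz
  set x₀ := (1 - y*z) / (y + z) with hx₀
  have hstr : ∀ t : ℝ, eval ![t, y, z] g =
      B2 g y z * t ^ 2 + ((eval ![1, y, z] g - eval ![-1, y, z] g) / 2) * t
        + eval ![0, y, z] g := by
    intro t
    have h := evalSq 0 g hd0 ![x, y, z] t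
    simpa [upd0, B2] using h
  have hnn' : ∀ t : ℝ, 0 ≤ B2 g y z * t ^ 2 + ((eval ![1, y, z] g - eval ![-1, y, z] g) / 2) * t
      + eval ![0, y, z] g := fun t => (hstr t) ▸ hnn ![t, y, z]
  have hq0 : x₀*z + y*z + x₀*y - 1 = 0 := by
    rw [hx₀]; field_simp; ring
  have hroot : B2 g y z * x₀ ^ 2 + ((eval ![1, y, z] g - eval ![-1, y, z] g) / 2) * x₀
      + eval ![0, y, z] g = 0 := by
    rw [← hstr]
    refine le_antisymm ?_ (hnn _)
    calc eval ![x₀, y, z] g ≤ (x₀*z + y*z + x₀*y - 1) ^ 2 := hub x₀ y z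
      _ = 0 := by rw [hq0]; ring
  have hfor := quad_nonneg_root _ _ _ x₀ hnn' hroot
  have heq : eval ![x, y, z] g = B2 g y z * (x - x₀) ^ 2 := by rw [hstr x, hfor x]
  rw [heq]
  have hfac : (x - x₀) * (y + z) = x*z + y*z + x*y - 1 := by
    rw [hx₀]; field_simp; ring
  calc B2 g y z * (x - x₀) ^ 2 * (y + z) ^ 2 = B2 g y z * ((x - x₀) * (y + z)) ^ 2 := by ring
    _ = _ := by rw [hfac]

lemma claimD (hd1 : g.degreeOf 1 ≤ 2) (hnn : ∀ v, 0 ≤ eval v g)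
    (hub : ∀ x y z : ℝ, eval ![x, y, z] g ≤ (x*z + y*z + x*y - 1) ^ 2) :
    ∀ x y z : ℝ, x + z ≠ 0 →
      eval ![x, y, z] g * (x + z) ^ 2 = D2 g x z * (x*z + y*z + x*y - 1) ^ 2 := by
  intro x y z hxz
  set y₀ := (1 - x*z) / (x + z) with hy₀
  have hstr : ∀ t : ℝ, eval ![x, t, z] g =
      D2 g x z * t ^ 2 + ((eval ![x, 1, z] g - eval ![x, -1, z] g) / 2) * t
        + eval ![x, 0, z] g := by
    intro t
    have h := evalSq 1 g hd1 ![x, y, z] t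
    simpa [upd1, D2] using h
  have hnn' : ∀ t : ℝ, 0 ≤ D2 g x z * t ^ 2 + ((eval ![x, 1, z] g - eval ![x, -1, z] g) / 2) * t
      + eval ![x, 0, z] g := fun t => (hstr t) ▸ hnn ![x, t, z]
  have hq0 : x*z + y₀*z + x*y₀ - 1 = 0 := by
    rw [hy₀]; field_simp; ring
  have hroot : D2 g x z * y₀ ^ 2 + ((eval ![x, 1, z] g - eval ![x, -1, z] g) / 2) * y₀
      + eval ![x, 0, z] g = 0 := by
    rw [← hstr]
    refine le_antisymm ?_ (hnn _)
    calc eval ![x, y₀, z] g ≤ (x*z + y₀*z + x*y₀ - 1) ^ 2 := hub x y₀ z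
      _ = 0 := by rw [hq0]; ring
  have hfor := quad_nonneg_root _ _ _ y₀ hnn' hroot
  have heq : eval ![x, y, z] g = D2 g x z * (y - y₀) ^ 2 := by rw [hstr y, hfor y]
  rw [heq]
  have hfac : (y - y₀) * (x + z) = x*z + y*z + x*y - 1 := by
    rw [hy₀]; field_simp; ring
  calc D2 g x z * (y - y₀) ^ 2 * (x + z) ^ 2 = D2 g x z * ((y - y₀) * (x + z)) ^ 2 := by ring
    _ = _ := by rw [hfac]


lemma stepAB (hd0 : g.degreeOf 0 ≤ 2) (hd2 : g.degreeOf 2 ≤ 2) (hnn : ∀ v, 0 ≤ eval v g)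
    (hub : ∀ x y z : ℝ, eval ![x, y, z] g ≤ (x*z + y*z + x*y - 1) ^ 2) :
    ∀ x y z : ℝ, x + y ≠ 0 → A2 g x y * (y + z) ^ 2 = B2 g y z * (x + y) ^ 2 := by
  intro x y z hxy
  set FB : Polynomial ℝ := Polynomial.C (1/2) * (phi 2 ![1, y, 0] g + phi 2 ![-1, y, 0] g)
      - phi 2 ![0, y, 0] g with hFBdef
  have hFB : ∀ t : ℝ, FB.eval t = B2 g y t := by
    intro t
    simp only [hFBdef, Polynomial.eval_sub, Polynomial.eval_mul, Polynomial.eval_add,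
      Polynomial.eval_C, phi_eval, upd2, B2]
    ring
  set f₁ : Polynomial ℝ := Polynomial.C (A2 g x y) * (Polynomial.C y + Polynomial.X) ^ 2 with hf₁
  set f₂ : Polynomial ℝ := FB * Polynomial.C ((x + y) ^ 2) with hf₂
  have he1 : ∀ t : ℝ, f₁.eval t = A2 g x y * (y + t) ^ 2 := by
    intro t; simp [hf₁]
  have he2 : ∀ t : ℝ, f₂.eval t = B2 g y t * (x + y) ^ 2 := by
    intro t; simp [hf₂, hFB t]
  have key := ext_off_finite f₁ f₂ {-y, (1 - x*y)/(x + y)}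
      ((Set.finite_singleton _).insert _) ?_ z
  · rw [he1 z, he2 z] at key; exact key
  · intro t ht
    simp only [Set.mem_insert_iff, Set.mem_singleton_iff, not_or] at ht
    obtain ⟨ht1, ht2⟩ := ht
    have hyt : y + t ≠ 0 := fun hc => ht1 (by linarith)
    have hqne : x*t + y*t + x*y - 1 ≠ 0 := by
      intro hc
      apply ht2
      rw [eq_div_iff hxy]
      linarith
    have h1 := claimA hd2 hnn hub x y t hxy
    have h2 := claimB hd0 hnn hub x y t hyt
    have hcomb : A2 g x y * (y + t) ^ 2 * (x*t + y*t + x*y - 1) ^ 2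
        = B2 g y t * (x + y) ^ 2 * (x*t + y*t + x*y - 1) ^ 2 := by
      linear_combination (x + y) ^ 2 * h2 - (y + t) ^ 2 * h1
    have := mul_right_cancel₀ (pow_ne_zero 2 hqne) hcomb
    rw [he1 t, he2 t]
    exact this

lemma stepAD (hd1 : g.degreeOf 1 ≤ 2) (hd2 : g.degreeOf 2 ≤ 2) (hnn : ∀ v, 0 ≤ eval v g)
    (hub : ∀ x y z : ℝ, eval ![x, y, z] g ≤ (x*z + y*z + x*y - 1) ^ 2) :
    ∀ x y z : ℝ, x + y ≠ 0 → A2 g x y * (x + z) ^ 2 = D2 g x z * (x + y) ^ 2 := by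
  intro x y z hxy
  set FD : Polynomial ℝ := Polynomial.C (1/2) * (phi 2 ![x, 1, 0] g + phi 2 ![x, -1, 0] g)
      - phi 2 ![x, 0, 0] g with hFDdef
  have hFD : ∀ t : ℝ, FD.eval t = D2 g x t := by
    intro t
    simp only [hFDdef, Polynomial.eval_sub, Polynomial.eval_mul, Polynomial.eval_add,
      Polynomial.eval_C, phi_eval, upd2, D2]
    ring
  set f₁ : Polynomial ℝ := Polynomial.C (A2 g x y) * (Polynomial.C x + Polynomial.X) ^ 2 with hf₁
  set f₂ : Polynomial ℝ := FD * Polynomial.C ((x + y) ^ 2) with hf₂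
  have he1 : ∀ t : ℝ, f₁.eval t = A2 g x y * (x + t) ^ 2 := by
    intro t; simp [hf₁]
  have he2 : ∀ t : ℝ, f₂.eval t = D2 g x t * (x + y) ^ 2 := by
    intro t; simp [hf₂, hFD t]
  have key := ext_off_finite f₁ f₂ {-x, (1 - x*y)/(x + y)}
      ((Set.finite_singleton _).insert _) ?_ z
  · rw [he1 z, he2 z] at key; exact key
  · intro t ht
    simp only [Set.mem_insert_iff, Set.mem_singleton_iff, not_or] at ht
    obtain ⟨ht1, ht2⟩ := ht
    have hxt : x + t ≠ 0 := fun hc => ht1 (by linarith)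
    have hqne : x*t + y*t + x*y - 1 ≠ 0 := by
      intro hc
      apply ht2
      rw [eq_div_iff hxy]
      linarith
    have h1 := claimA hd2 hnn hub x y t hxy
    have h2 := claimD hd1 hnn hub x y t hxt
    have hcomb : A2 g x y * (x + t) ^ 2 * (x*t + y*t + x*y - 1) ^ 2
        = D2 g x t * (x + y) ^ 2 * (x*t + y*t + x*y - 1) ^ 2 := by
      linear_combination (x + y) ^ 2 * h2 - (x + t) ^ 2 * h1
    have := mul_right_cancel₀ (pow_ne_zero 2 hqne) hcomb
    rw [he1 t, he2 t]
    exact this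


lemma gfinal (hd0 : g.degreeOf 0 ≤ 2) (hd1 : g.degreeOf 1 ≤ 2) (hd2 : g.degreeOf 2 ≤ 2)
    (hnn : ∀ v, 0 ≤ eval v g)
    (hub : ∀ x y z : ℝ, eval ![x, y, z] g ≤ (x*z + y*z + x*y - 1) ^ 2) :
    ∀ x y z : ℝ, eval ![x, y, z] g
      = eval ![(0:ℝ), 0, 0] g * (x*z + y*z + x*y - 1) ^ 2 := by
  have hfb : ∀ x y : ℝ, x + y ≠ 0 → A2 g x y = B2 g y (1 - y) * (x + y) ^ 2 := by
    intro x y hxy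
    have h := stepAB hd0 hd2 hnn hub x y (1 - y) hxy
    have e : (y + (1 - y)) ^ 2 = 1 := by ring
    rw [e, mul_one] at h
    exact h
  have hfd : ∀ x y : ℝ, x + y ≠ 0 → A2 g x y = D2 g x (1 - x) * (x + y) ^ 2 := by
    intro x y hxy
    have h := stepAD hd1 hd2 hnn hub x y (1 - x) hxy
    have e : (x + (1 - x)) ^ 2 = 1 := by ring
    rw [e, mul_one] at h
    exact h
  have hbd : ∀ x y : ℝ, x + y ≠ 0 → B2 g y (1 - y) = D2 g x (1 - x) := by
    intro x y hxy
    have h := (hfb x y hxy).symm.trans (hfd x y hxy)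
    exact mul_right_cancel₀ (pow_ne_zero 2 hxy) h
  set c := D2 g 1 0 with hc
  have hc0 : D2 g 1 0 = D2 g 1 (1 - (1:ℝ)) := by norm_num
  have hfbc : ∀ y : ℝ, B2 g y (1 - y) = c := by
    intro y
    by_cases hy : y = -1
    · subst hy
      have h1 : B2 g (-1) (1 - (-1:ℝ)) = D2 g 0 (1 - (0:ℝ)) := hbd 0 (-1) (by norm_num)
      have h2 : B2 g 1 (1 - (1:ℝ)) = D2 g 0 (1 - (0:ℝ)) := hbd 0 1 (by norm_num)
      have h3 : B2 g 1 (1 - (1:ℝ)) = D2 g 1 (1 - (1:ℝ)) := hbd 1 1 (by norm_num)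
      rw [h1, ← h2, h3, hc, hc0]
    · have h1 : B2 g y (1 - y) = D2 g 1 (1 - (1:ℝ)) := by
        refine hbd 1 y ?_
        intro hcon
        exact hy (by linarith)
      rw [h1, hc, hc0]
  have hA : ∀ x y : ℝ, x + y ≠ 0 → A2 g x y = c * (x + y) ^ 2 := by
    intro x y hxy
    rw [hfb x y hxy, hfbc y]
  have hmain' : ∀ x y z : ℝ, x + y ≠ 0 →
      eval ![x, y, z] g = c * (x*z + y*z + x*y - 1) ^ 2 := by
    intro x y z hxy
    have h1 := claimA hd2 hnn hub x y z hxy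
    rw [hA x y hxy] at h1
    refine mul_right_cancel₀ (pow_ne_zero 2 hxy) ?_
    linear_combination h1
  have hmain : ∀ x y z : ℝ, eval ![x, y, z] g = c * (x*z + y*z + x*y - 1) ^ 2 := by
    intro x y z
    set f₁ : Polynomial ℝ := phi 0 ![0, y, z] g with hf₁
    set f₂ : Polynomial ℝ := Polynomial.C c
        * (Polynomial.C (y*z) + Polynomial.X * Polynomial.C (z + y) - 1) ^ 2 with hf₂
    have he1 : ∀ t : ℝ, f₁.eval t = eval ![t, y, z] g := by
      intro t; rw [hf₁, phi_eval, upd0]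
    have he2 : ∀ t : ℝ, f₂.eval t = c * (y*z + t*(z + y) - 1) ^ 2 := by
      intro t; simp [hf₂]
    have key := ext_off_finite f₁ f₂ {-y} (Set.finite_singleton _) ?_ x
    · rw [he1 x, he2 x] at key
      rw [key]; ring
    · intro t ht
      simp only [Set.mem_singleton_iff] at ht
      have hty : t + y ≠ 0 := fun hcon => ht (by linarith)
      have := hmain' t y z hty
      rw [he1 t, he2 t, this]
      ring
  have hcval : eval ![(0:ℝ), 0, 0] g = c := by
    have := hmain 0 0 0
    simpa using this
  intro x y z
  rw [hcval]
  exact hmain x y z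

end

/-- Proposition 6 (part): `P₄(x,y,z) = (xz + yz + xy − 1)²` is extremal in `σ_P(2,2,2)`. -/
theorem P4_extremal_in_sigmaP (P₄ : MvPolynomial (Fin 3) ℝ)
    (hP₄ : P₄ = (X 0 * X 2 + X 1 * X 2 + X 0 * X 1 - 1) ^ 2) :
    ∀ g h : MvPolynomial (Fin 3) ℝ, g ∈ sigmaP222 → h ∈ sigmaP222 → P₄ = g + h →
      ∃ c : ℝ, 0 ≤ c ∧ g = C c * P₄ := by
  subst hP₄
  intro g h hg hh hsum
  obtain ⟨hd0, hd1, hd2, hnn⟩ := hg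
  obtain ⟨-, -, -, hnnh⟩ := hh
  have hub : ∀ x y z : ℝ, eval ![x, y, z] g ≤ (x*z + y*z + x*y - 1) ^ 2 := by
    intro x y z
    have hs := congrArg (eval ![x, y, z]) hsum
    simp only [map_add, map_pow, map_sub, map_mul, map_one, eval_X] at hs
    have hh' := hnnh ![x, y, z]
    have hx0 : (![x, y, z] : Fin 3 → ℝ) 0 = x := rfl
    have hx1 : (![x, y, z] : Fin 3 → ℝ) 1 = y := rfl
    have hx2 : (![x, y, z] : Fin 3 → ℝ) 2 = z := rfl
    rw [hx0, hx1, hx2] at hs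
    nlinarith [hs, hh']
  have hfin := gfinal hd0 hd1 hd2 hnn hub
  refine ⟨eval ![(0:ℝ), 0, 0] g, hnn _, ?_⟩
  apply MvPolynomial.funext
  intro v
  have h1 := hfin (v 0) (v 1) (v 2)
  rw [veta v] at h1
  rw [h1]
  simp only [map_mul, eval_C, map_pow, map_sub, map_add, map_one, eval_X]
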